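/- arXiv:2107.10890 — 10 statements merged into one kernel-verified Lean document; each statement's English description precedes it below -/
import Mathlib

section
/- A linear map T: V → g is a Θ-twisted O-operator if and only if its graph Gr(T) = {(Tu, u) | u ∈ V} is a subalgebra of the Θ-twisted semidirect product 3-Lie algebra g ⋉_Θ V. -/
universe u

def Skew12 {A M : Type*} [Neg M] (f : A → A → A → M) : Prop :=
  ∀ x y z, f x y z = - f y x z

def Skew23 {A M : Type*} [Neg M] (f : A → A → A → M) : Prop :=
  ∀ x y z, f x y z = - f x z y

def LinFst (K : Type*) [Field K] {A M : Type*} [AddCommGroup A] [Module K A]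
    [AddCommGroup M] [Module K M] (f : A → A → A → M) : Prop :=
  ∀ (a : K) (x x' y z : A), f (a • x + x') y z = a • f x y z + f x' y z

def LinThd (K : Type*) [Field K] {A M : Type*} [AddCommGroup A] [Module K A]
    [AddCommGroup M] [Module K M] (f : A → A → A → M) : Prop :=
  ∀ (a : K) (x y z z' : A), f x y (a • z + z') = a • f x y z + f x y z'

/-- A 3-Lie algebra structure: a trilinear skew-symmetric bracket satisfying
the Filippov (fundamental) identity. -/
def IsThreeLie (K : Type*) [Field K] {A : Type*} [AddCommGroup A] [Module K A]
    (b : A → A → A → A) : Prop :=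
  LinFst K b ∧ Skew12 b ∧ Skew23 b ∧
    ∀ x1 x2 x3 x4 x5 : A,
      b x1 x2 (b x3 x4 x5) =
        b (b x1 x2 x3) x4 x5 + b x3 (b x1 x2 x4) x5 + b x3 x4 (b x1 x2 x5)

/-- A representation of a 3-Lie algebra on a module. -/
def IsRep (K : Type*) [Field K] {A M : Type*} [AddCommGroup A] [Module K A]
    [AddCommGroup M] [Module K M] (b : A → A → A → A) (ρ : A → A → M → M) : Prop :=
  (∀ (a : K) (x x' y : A) (v : M), ρ (a • x + x') y v = a • ρ x y v + ρ x' y v) ∧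
  (∀ (x y : A) (v : M), ρ x y v = - ρ y x v) ∧
  (∀ (x y : A) (a : K) (v v' : M), ρ x y (a • v + v') = a • ρ x y v + ρ x y v') ∧
  (∀ (x1 x2 x3 x4 : A) (v : M),
      ρ x1 x2 (ρ x3 x4 v) =
        ρ (b x1 x2 x3) x4 v + ρ x3 (b x1 x2 x4) v + ρ x3 x4 (ρ x1 x2 v)) ∧
  (∀ (x1 x2 x3 x4 : A) (v : M),
      ρ (b x1 x2 x3) x4 v =
        ρ x1 x2 (ρ x3 x4 v) + ρ x2 x3 (ρ x1 x4 v) + ρ x3 x1 (ρ x2 x4 v))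

/-- A 2-cocycle in the Chevalley-Eilenberg complex of a 3-Lie algebra. -/
def IsCocycle (K : Type*) [Field K] {A M : Type*} [AddCommGroup A] [Module K A]
    [AddCommGroup M] [Module K M] (b : A → A → A → A) (ρ : A → A → M → M)
    (Θ : A → A → A → M) : Prop :=
  LinFst K Θ ∧ Skew12 Θ ∧ Skew23 Θ ∧
    ∀ x1 x2 y1 y2 y3 : A,
      Θ x1 x2 (b y1 y2 y3) + ρ x1 x2 (Θ y1 y2 y3) =
        Θ (b x1 x2 y1) y2 y3 + Θ y1 (b x1 x2 y2) y3 + Θ y1 y2 (b x1 x2 y3)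
          + ρ y2 y3 (Θ x1 x2 y1) + ρ y3 y1 (Θ x1 x2 y2) + ρ y1 y2 (Θ x1 x2 y3)

/-- A Θ-twisted O-operator on a 3-Lie algebra. -/
def IsTwistedO {K : Type*} [Field K] {A M : Type*} [AddCommGroup A] [Module K A]
    [AddCommGroup M] [Module K M] (b : A → A → A → A) (ρ : A → A → M → M)
    (Θ : A → A → A → M) (T : M →ₗ[K] A) : Prop :=
  ∀ u v w : M,
    b (T u) (T v) (T w) =
      T (ρ (T u) (T v) w + ρ (T v) (T w) u + ρ (T w) (T u) v + Θ (T u) (T v) (T w))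

/-- The Θ-twisted semidirect product bracket on A × M. -/
def sdBracket {A M : Type*} [AddCommGroup M]
    (b : A → A → A → A) (ρ : A → A → M → M) (Θ : A → A → A → M) :
    A × M → A × M → A × M → A × M :=
  fun p q r =>
    (b p.1 q.1 r.1,
      ρ p.1 q.1 r.2 + ρ r.1 p.1 q.2 + ρ q.1 r.1 p.2 + Θ p.1 q.1 r.1)

/-- The bracket [u,v,w]_T induced on V by a twisted O-operator T. -/
def indBracket {K : Type*} [Field K] {A M : Type*} [AddCommGroup A] [Module K A]
    [AddCommGroup M] [Module K M] (ρ : A → A → M → M) (Θ : A → A → A → M)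
    (T : M →ₗ[K] A) : M → M → M → M :=
  fun u v w =>
    ρ (T u) (T v) w + ρ (T v) (T w) u + ρ (T w) (T u) v + Θ (T u) (T v) (T w)

/-- Chevalley-Eilenberg coboundary of a 1-cochain θ : g → V. -/
def cobound {K : Type*} [Field K] {A M : Type*} [AddCommGroup A] [Module K A]
    [AddCommGroup M] [Module K M] (b : A → A → A → A) (ρ : A → A → M → M)
    (θ : A →ₗ[K] M) : A → A → A → M :=
  fun x y z => ρ x y (θ z) + ρ y z (θ x) + ρ z x (θ y) - θ (b x y z)

/-- Cyclic sum {x,y,z}^C = {x,y,z} + {y,z,x} + {z,x,y}. -/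
def cycSum {A : Type*} [AddCommGroup A] (m : A → A → A → A) : A → A → A → A :=
  fun x y z => m x y z + m y z x + m z x y

/-- Subadjacent bracket [x,y,z]_* = {x,y,z}^C + [[x,y,z]] of a 3-NS-Lie algebra. -/
def nsStar {A : Type*} [AddCommGroup A] (m n : A → A → A → A) : A → A → A → A :=
  fun x y z => cycSum m x y z + n x y z

/-- A 3-NS-Lie algebra structure on A given by operations m = {·,·,·} and n = [[·,·,·]]. -/
def IsThreeNS (K : Type*) [Field K] {A : Type*} [AddCommGroup A] [Module K A]
    (m n : A → A → A → A) : Prop :=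
  LinFst K m ∧ LinThd K m ∧ Skew12 m ∧ LinFst K n ∧ Skew12 n ∧ Skew23 n ∧
  (∀ x1 x2 x3 x4 x5 : A,
      m x1 x2 (m x3 x4 x5) =
        m (cycSum m x1 x2 x3) x4 x5 + m (n x1 x2 x3) x4 x5
          + m x3 (cycSum m x1 x2 x4) x5 + m x3 (n x1 x2 x4) x5
          + m x3 x4 (m x1 x2 x5)) ∧
  (∀ x1 x2 x3 x4 x5 : A,
      m (cycSum m x1 x2 x3) x4 x5 + m (n x1 x2 x3) x4 x5 =
        m x1 x2 (m x3 x4 x5) + m x2 x3 (m x1 x4 x5) + m x3 x1 (m x2 x4 x5)) ∧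
  (∀ x1 x2 x3 x4 x5 : A,
      n x1 x2 (nsStar m n x3 x4 x5) + m x1 x2 (n x3 x4 x5) =
        n (nsStar m n x1 x2 x3) x4 x5 + n x3 (nsStar m n x1 x2 x4) x5
          + n x3 x4 (nsStar m n x1 x2 x5)
          + m x4 x5 (n x1 x2 x3) + m x5 x3 (n x1 x2 x4) + m x3 x4 (n x1 x2 x5))

/-- Nijenhuis operator on a 3-Lie algebra. -/
def IsNijenhuis {K : Type*} [Field K] {A : Type*} [AddCommGroup A] [Module K A]
    (b : A → A → A → A) (N : A →ₗ[K] A) : Prop :=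
  ∀ x y z : A,
    b (N x) (N y) (N z) =
      N (b (N x) (N y) z + b (N x) y (N z) + b x (N y) (N z)
        - N (b (N x) y z + b x (N y) z + b x y (N z)) + N (N (b x y z)))

/-- A Lie algebra structure (bilinear skew bracket with Jacobi identity). -/
def IsLie (K : Type*) [Field K] {A : Type*} [AddCommGroup A] [Module K A]
    (br : A → A → A) : Prop :=
  (∀ (a : K) (x x' y : A), br (a • x + x') y = a • br x y + br x' y) ∧
  (∀ x y : A, br x y = - br y x) ∧
  (∀ x y z : A, br x (br y z) = br (br x y) z + br y (br x z))

/-- A representation of a Lie algebra. -/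
def IsLieRep (K : Type*) [Field K] {A M : Type*} [AddCommGroup A] [Module K A]
    [AddCommGroup M] [Module K M] (br : A → A → A) (ρ : A → M → M) : Prop :=
  (∀ (a : K) (x x' : A) (v : M), ρ (a • x + x') v = a • ρ x v + ρ x' v) ∧
  (∀ (x : A) (a : K) (v v' : M), ρ x (a • v + v') = a • ρ x v + ρ x v') ∧
  (∀ (x y : A) (v : M), ρ (br x y) v = ρ x (ρ y v) - ρ y (ρ x v))

/-- A Chevalley-Eilenberg 2-cocycle of a Lie algebra. -/
def IsLieCocycle (K : Type*) [Field K] {A M : Type*} [AddCommGroup A] [Module K A]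
    [AddCommGroup M] [Module K M] (br : A → A → A) (ρ : A → M → M)
    (Θ : A → A → M) : Prop :=
  (∀ (a : K) (x x' y : A), Θ (a • x + x') y = a • Θ x y + Θ x' y) ∧
  (∀ x y : A, Θ x y = - Θ y x) ∧
  (∀ x y z : A,
      ρ x (Θ y z) + ρ y (Θ z x) + ρ z (Θ x y)
        + Θ x (br y z) + Θ y (br z x) + Θ z (br x y) = 0)

/-- A Θ-twisted O-operator on a Lie algebra. -/
def IsLieTwistedO {K : Type*} [Field K] {A M : Type*} [AddCommGroup A] [Module K A]
    [AddCommGroup M] [Module K M] (br : A → A → A) (ρ : A → M → M)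
    (Θ : A → A → M) (T : M →ₗ[K] A) : Prop :=
  ∀ u v : M, br (T u) (T v) = T (ρ (T u) v - ρ (T v) u + Θ (T u) (T v))

/-- The 3-Lie bracket induced by a Lie bracket and a trace map τ. -/
def inducedTri {K : Type*} [Field K] {A : Type*} [AddCommGroup A] [Module K A]
    (br : A → A → A) (τ : A →ₗ[K] K) : A → A → A → A :=
  fun x y z => τ x • br y z + τ y • br z x + τ z • br x y

/-- The induced representation ρ_τ of the induced 3-Lie algebra. -/
def rhoTau {K : Type*} [Field K] {A M : Type*} [AddCommGroup A] [Module K A]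
    [AddCommGroup M] [Module K M] (ρ : A → M → M) (τ : A →ₗ[K] K) :
    A → A → M → M :=
  fun x y v => τ x • ρ y v - τ y • ρ x v

/-- The induced 2-cocycle Θ_τ on the induced 3-Lie algebra. -/
def thetaTau {K : Type*} [Field K] {A M : Type*} [AddCommGroup A] [Module K A]
    [AddCommGroup M] [Module K M] (Θ : A → A → M) (τ : A →ₗ[K] K) :
    A → A → A → M :=
  fun x y z => τ x • Θ y z + τ y • Θ z x + τ z • Θ x y

/-- An NS-Lie algebra structure on A. -/
def IsNSLie (K : Type*) [Field K] {A : Type*} [AddCommGroup A] [Module K A]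
    (m n : A → A → A) : Prop :=
  (∀ (a : K) (x x' y : A), m (a • x + x') y = a • m x y + m x' y) ∧
  (∀ (x : A) (a : K) (y y' : A), m x (a • y + y') = a • m x y + m x y') ∧
  (∀ (a : K) (x x' y : A), n (a • x + x') y = a • n x y + n x' y) ∧
  (∀ x y : A, n x y = - n y x) ∧
  (∀ x y z : A,
      m (m x y) z - m x (m y z) - m (m y x) z + m y (m x z) + m (n x y) z = 0) ∧
  (∀ x y z : A,
      n x (m y z - m z y + n y z) + n y (m z x - m x z + n z x)
        + n z (m x y - m y x + n x y)
        + m x (n y z) + m y (n z x) + m z (n x y) = 0)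

/-- T is a Θ-twisted O-operator iff its graph is a subalgebra of g ⋉_Θ V. -/
theorem stmt1 {K : Type*} [Field K] {A M : Type*} [AddCommGroup A] [Module K A]
    [AddCommGroup M] [Module K M]
    (b : A → A → A → A) (ρ : A → A → M → M) (Θ : A → A → A → M) (T : M →ₗ[K] A)
    (hb : IsThreeLie K b) (hρ : IsRep K b ρ) (hΘ : IsCocycle K b ρ Θ) :
    IsTwistedO b ρ Θ T ↔
      ∀ p q r : A × M, T p.2 = p.1 → T q.2 = q.1 → T r.2 = r.1 →
        T (sdBracket b ρ Θ p q r).2 = (sdBracket b ρ Θ p q r).1 := by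
  constructor
  · rintro hT ⟨x, u⟩ ⟨y, v⟩ ⟨z, w⟩ hu hv hw
    simp only [sdBracket] at *
    subst hu hv hw
    rw [hT u v w, map_add, map_add, map_add]
    simp only [map_add]
    abel
  · intro h u v w
    have := h (T u, u) (T v, v) (T w, w) rfl rfl rfl
    simp only [sdBracket] at this
    rw [map_add, map_add, map_add, ← this]
    simp only [map_add]
    abel
end

section
/- If T: V → g is a Θ-twisted O-operator, then the bracket [u,v,w]_T = ρ(Tu,Tv)w + ρ(Tv,Tw)u + ρ(Tw,Tu)v + Θ(Tu,Tv,Tw) defines a 3-Lie algebra structure on V, and T is a morphism of 3-Lie algebras from (V, [·,·,·]_T) to (g, [·,·,·]_g), i.e. T([u,v,w]_T) = [Tu,Tv,Tw]_g. -/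
universe u

/-! The graph `{(T u, u)}` of `T` is closed under the twisted semidirect product bracket of
`A × M`, which is a 3-Lie algebra because `ρ` is a representation and `Θ` a 2-cocycle; the
bracket `[·,·,·]_T` is the one this subalgebra inherits through the isomorphism `u ↦ (T u, u)`. -/

section Representation

variable {K : Type*} [Field K] {A M : Type*} [AddCommGroup A] [Module K A]
  [AddCommGroup M] [Module K M] {b : A → A → A → A} {ρ : A → A → M → M}

theorem IsRep.map_add_right (hρ : IsRep K b ρ) (x y : A) (v v' : M) :
    ρ x y (v + v') = ρ x y v + ρ x y v' := by
  simpa only [one_smul] using hρ.2.2.1 x y 1 v v'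

theorem IsRep.map_neg_right (hρ : IsRep K b ρ) (x y : A) (v : M) :
    ρ x y (-v) = -ρ x y v :=
  (AddMonoidHom.mk' (ρ x y) (hρ.map_add_right x y)).map_neg v

theorem IsRep.linear_snd (hρ : IsRep K b ρ) (a : K) (x y y' : A) (v : M) :
    ρ x (a • y + y') v = a • ρ x y v + ρ x y' v := by
  rw [hρ.2.1 x, hρ.1, hρ.2.1 y, hρ.2.1 y']
  module

theorem IsRep.snd_bracket (hρ : IsRep K b ρ) (x y1 y2 y3 : A) (v : M) :
    ρ x (b y1 y2 y3) v =
      ρ y1 y2 (ρ x y3 v) + ρ y2 y3 (ρ x y1 v) + ρ y3 y1 (ρ x y2 v) := by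
  rw [hρ.2.1 x, hρ.2.2.2.2, hρ.2.1 y3 x, hρ.2.1 y1 x, hρ.2.1 y2 x,
    hρ.map_neg_right, hρ.map_neg_right, hρ.map_neg_right]
  abel

end Representation

section SemidirectProduct

variable {K : Type*} [Field K] {A M : Type*} [AddCommGroup A] [Module K A]
  [AddCommGroup M] [Module K M] {b : A → A → A → A} {ρ : A → A → M → M} {Θ : A → A → A → M}

theorem sdBracket_isThreeLie (hb : IsThreeLie K b) (hρ : IsRep K b ρ)
    (hΘ : IsCocycle K b ρ Θ) : IsThreeLie K (sdBracket b ρ Θ) := by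
  obtain ⟨hb_lin, hb_skew12, hb_skew23, hb_filippov⟩ := hb
  obtain ⟨hΘ_lin, hΘ_skew12, hΘ_skew23, hΘ_cocycle⟩ := hΘ
  refine ⟨?_, ?_, ?_, ?_⟩
  · intro a p p' q r
    refine Prod.ext (hb_lin ..) ?_
    simp only [sdBracket, Prod.fst_add, Prod.snd_add, Prod.smul_fst, Prod.smul_snd]
    rw [hρ.1, hρ.linear_snd, hρ.2.2.1, hΘ_lin]
    module
  · intro p q r
    refine Prod.ext (hb_skew12 ..) ?_
    simp only [sdBracket, Prod.snd_neg]
    rw [hρ.2.1 q.1 p.1, hρ.2.1 p.1 r.1, hρ.2.1 r.1 q.1, hΘ_skew12]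
    abel
  · intro p q r
    refine Prod.ext (hb_skew23 ..) ?_
    simp only [sdBracket, Prod.snd_neg]
    rw [hρ.2.1 r.1 p.1, hρ.2.1 q.1 p.1, hρ.2.1 q.1 r.1, hΘ_skew23]
    abel
  · rintro ⟨x1, v1⟩ ⟨x2, v2⟩ ⟨x3, v3⟩ ⟨x4, v4⟩ ⟨x5, v5⟩
    refine Prod.ext (hb_filippov ..) ?_
    simp only [sdBracket, Prod.snd_add, hρ.map_add_right]
    -- the `v₁`, …, `v₅` parts are representation axioms, the rest is the cocycle condition
    linear_combination (norm := abel) hρ.2.2.2.1 x1 x2 x3 x4 v5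
      + hρ.2.2.2.1 x1 x2 x5 x3 v4 + hρ.2.2.2.1 x1 x2 x4 x5 v3
      + hρ.2.2.2.2 x3 x4 x5 x1 v2 + hρ.snd_bracket x2 x3 x4 x5 v1
      + hΘ_cocycle x1 x2 x3 x4 x5

end SemidirectProduct

theorem IsThreeLie.of_injective {K : Type*} [Field K] {M N : Type*} [AddCommGroup M]
    [Module K M] [AddCommGroup N] [Module K N] {B : N → N → N → N} (hB : IsThreeLie K B)
    {c : M → M → M → M} (φ : M →ₗ[K] N) (hφ : Function.Injective φ)
    (hc : ∀ x y z, φ (c x y z) = B (φ x) (φ y) (φ z)) : IsThreeLie K c := by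
  obtain ⟨hB_lin, hB_skew12, hB_skew23, hB_filippov⟩ := hB
  refine ⟨fun a x x' y z => hφ ?_, fun x y z => hφ ?_, fun x y z => hφ ?_,
    fun x1 x2 x3 x4 x5 => hφ ?_⟩ <;>
    simp only [hc, map_add, map_smul, map_neg]
  exacts [hB_lin .., hB_skew12 .., hB_skew23 .., hB_filippov ..]

section Graph

variable {K : Type*} [Field K] {A M : Type*} [AddCommGroup A] [Module K A]
  [AddCommGroup M] [Module K M]

def graphEmbedding (T : M →ₗ[K] A) : M →ₗ[K] A × M :=
  T.prod LinearMap.id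

theorem graphEmbedding_apply (T : M →ₗ[K] A) (u : M) : graphEmbedding T u = (T u, u) :=
  rfl

theorem graphEmbedding_injective (T : M →ₗ[K] A) : Function.Injective (graphEmbedding T) :=
  fun _ _ h => congrArg Prod.snd h

theorem graphEmbedding_indBracket {b : A → A → A → A} {ρ : A → A → M → M}
    {Θ : A → A → A → M} {T : M →ₗ[K] A} (hT : IsTwistedO b ρ Θ T) (u v w : M) :
    graphEmbedding T (indBracket ρ Θ T u v w) =
      sdBracket b ρ Θ (graphEmbedding T u) (graphEmbedding T v) (graphEmbedding T w) := by
  refine Prod.ext (hT u v w).symm ?_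
  simp only [graphEmbedding_apply, indBracket, sdBracket]
  abel

end Graph

/-- the induced bracket [·,·,·]_T is a 3-Lie algebra structure on V and
T is a morphism of 3-Lie algebras. -/
theorem stmt2 {K : Type*} [Field K] {A M : Type*} [AddCommGroup A] [Module K A]
    [AddCommGroup M] [Module K M]
    (b : A → A → A → A) (ρ : A → A → M → M) (Θ : A → A → A → M) (T : M →ₗ[K] A)
    (hb : IsThreeLie K b) (hρ : IsRep K b ρ) (hΘ : IsCocycle K b ρ Θ)
    (hT : IsTwistedO b ρ Θ T) :
    IsThreeLie K (indBracket ρ Θ T) ∧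
      ∀ u v w : M, T (indBracket ρ Θ T u v w) = b (T u) (T v) (T w) :=
  ⟨(sdBracket_isThreeLie hb hρ hΘ).of_injective (graphEmbedding T)
      (graphEmbedding_injective T) (graphEmbedding_indBracket hT),
    fun u v w => (hT u v w).symm⟩
end

section
/- Let θ: g → V be an invertible linear map (a 1-cochain). Then T = θ⁻¹: V → g is a Θ-twisted O-operator with Θ = -∂θ, where (∂θ)(x,y,z) = ρ(x,y)θ(z) + ρ(y,z)θ(x) + ρ(z,x)θ(y) - θ([x,y,z]_g). -/
universe u

/-- the inverse of an invertible 1-cochain θ is a (-∂θ)-twisted O-operator. -/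
theorem stmt3 {K : Type*} [Field K] {A M : Type*} [AddCommGroup A] [Module K A]
    [AddCommGroup M] [Module K M]
    (b : A → A → A → A) (ρ : A → A → M → M) (θ : A ≃ₗ[K] M)
    (hb : IsThreeLie K b) (hρ : IsRep K b ρ) :
    IsTwistedO b ρ (fun x y z => - cobound b ρ θ.toLinearMap x y z)
      θ.symm.toLinearMap := by
  intro u v w
  simp only [IsTwistedO, cobound, LinearEquiv.coe_coe]
  rw [show ρ (θ.symm u) (θ.symm v) w + ρ (θ.symm v) (θ.symm w) u + ρ (θ.symm w) (θ.symm u) v +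
      -(ρ (θ.symm u) (θ.symm v) (θ (θ.symm w)) + ρ (θ.symm v) (θ.symm w) (θ (θ.symm u)) +
        ρ (θ.symm w) (θ.symm u) (θ (θ.symm v)) - θ (b (θ.symm u) (θ.symm v) (θ.symm w))) =
      θ (b (θ.symm u) (θ.symm v) (θ.symm w)) by
    simp [θ.apply_symm_apply]]
  exact (θ.symm_apply_apply _).symm
end

section
/- Let T: V → g be a Θ-twisted O-operator and θ a 1-cochain such that Id_V - θ∘T is invertible. Then T∘(Id_V - θ∘T)⁻¹: V → g is a (Θ + ∂θ)-twisted O-operator. -/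
universe u

/-- if Id - θ∘T is invertible then T∘(Id - θ∘T)⁻¹ is a (Θ+∂θ)-twisted
O-operator. -/
theorem stmt5 {K : Type*} [Field K] {A M : Type*} [AddCommGroup A] [Module K A]
    [AddCommGroup M] [Module K M]
    (b : A → A → A → A) (ρ : A → A → M → M) (Θ : A → A → A → M)
    (T : M →ₗ[K] A) (θ : A →ₗ[K] M) (S : M →ₗ[K] M)
    (hb : IsThreeLie K b) (hρ : IsRep K b ρ) (hΘ : IsCocycle K b ρ Θ)
    (hT : IsTwistedO b ρ Θ T)
    (hS1 : S ∘ₗ ((LinearMap.id : M →ₗ[K] M) - θ ∘ₗ T) = LinearMap.id)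
    (hS2 : ((LinearMap.id : M →ₗ[K] M) - θ ∘ₗ T) ∘ₗ S = LinearMap.id) :
    IsTwistedO b ρ (fun x y z => Θ x y z + cobound b ρ θ x y z) (T ∘ₗ S) := by
  intro u v w
  have key1 : ∀ m : M, S (m - θ (T m)) = m := by
    intro m
    have h := congrArg (fun f : M →ₗ[K] M => f m) hS1
    simpa [LinearMap.sub_apply, map_sub] using h
  have key2 : ∀ m : M, S m - θ (T (S m)) = m := by
    intro m
    have h := congrArg (fun f : M →ₗ[K] M => f m) hS2
    simpa [LinearMap.sub_apply] using h
  have hrep3 : ∀ (x y : A) (p q : M), ρ x y (p + q) = ρ x y p + ρ x y q := by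
    intro x y p q
    have := hρ.2.2.1 x y 1 p q
    simpa using this
  set x := T (S u) with hx
  set y := T (S v) with hy
  set z := T (S w) with hz
  have hSu : S u = u + θ x := by
    have := key2 u
    rw [← hx] at this; exact eq_add_of_sub_eq this
  have hSv : S v = v + θ y := by
    have := key2 v
    rw [← hy] at this; exact eq_add_of_sub_eq this
  have hSw : S w = w + θ z := by
    have := key2 w
    rw [← hz] at this; exact eq_add_of_sub_eq this
  set P := ρ x y w + ρ y z u + ρ z x v + Θ x y z
    + (ρ x y (θ z) + ρ y z (θ x) + ρ z x (θ y)) with hP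
  have hbP : b x y z = T P := by
    have h := hT (S u) (S v) (S w)
    rw [← hx, ← hy, ← hz] at h
    rw [hSu, hSv, hSw, hrep3, hrep3, hrep3] at h
    rw [h, hP]
    congr 1
    abel
  set Q := ρ x y w + ρ y z u + ρ z x v
    + (Θ x y z + cobound b ρ θ x y z) with hQ
  have hPQ : Q = P - θ (b x y z) := by
    rw [hQ, hP, cobound]
    abel
  have hSQ : S Q = P := by
    have h := key1 P
    rw [← hbP] at h
    rw [hPQ, h]
  show b ((T ∘ₗ S) u) ((T ∘ₗ S) v) ((T ∘ₗ S) w) = (T ∘ₗ S) Q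
  rw [LinearMap.comp_apply, LinearMap.comp_apply, LinearMap.comp_apply,
    LinearMap.comp_apply, ← hx, ← hy, ← hz, hSQ, ← hbP]
end

section
/- Let T: V → g be a Θ-twisted O-operator and θ: g → V a 1-cocycle (i.e. ∂θ = 0) such that Id_V + θ∘T is invertible. Then T_θ := T∘(Id_V + θ∘T)⁻¹ is again a Θ-twisted O-operator (the gauge transformation of T by θ). -/
universe u

/-- gauge transformation: if θ is a 1-cocycle and Id + θ∘T is invertible,
then T∘(Id + θ∘T)⁻¹ is again a Θ-twisted O-operator. -/
theorem stmt6 {K : Type*} [Field K] {A M : Type*} [AddCommGroup A] [Module K A]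
    [AddCommGroup M] [Module K M]
    (b : A → A → A → A) (ρ : A → A → M → M) (Θ : A → A → A → M)
    (T : M →ₗ[K] A) (θ : A →ₗ[K] M) (S : M →ₗ[K] M)
    (hb : IsThreeLie K b) (hρ : IsRep K b ρ) (hΘ : IsCocycle K b ρ Θ)
    (hT : IsTwistedO b ρ Θ T)
    (hθ : ∀ x y z : A, ρ x y (θ z) + ρ y z (θ x) + ρ z x (θ y) = θ (b x y z))
    (hS1 : S ∘ₗ ((LinearMap.id : M →ₗ[K] M) + θ ∘ₗ T) = LinearMap.id)
    (hS2 : ((LinearMap.id : M →ₗ[K] M) + θ ∘ₗ T) ∘ₗ S = LinearMap.id) :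
    IsTwistedO b ρ Θ (T ∘ₗ S) := by
  intro u v w
  have hadd : ∀ (x y : A) (p q : M), ρ x y (p + q) = ρ x y p + ρ x y q := by
    intro x y p q
    have := hρ.2.2.1 x y 1 p q
    simpa using this
  have hS1' : ∀ m : M, S (m + θ (T m)) = m := by
    intro m
    have := LinearMap.ext_iff.mp hS1 m
    simpa using this
  have hS2' : ∀ m : M, S m + θ (T (S m)) = m := by
    intro m
    have := LinearMap.ext_iff.mp hS2 m
    simpa using this
  set x := T (S u) with hx
  set y := T (S v) with hy
  set z := T (S w) with hz
  set P : M := ρ x y (S w) + ρ y z (S u) + ρ z x (S v) + Θ x y z with hP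
  have hTP : T P = b x y z := (hT (S u) (S v) (S w)).symm
  have hkey : P + θ (T P) = ρ x y w + ρ y z u + ρ z x v + Θ x y z := by
    rw [hTP, ← hθ x y z, hP]
    have h1 : ρ x y (S w) + ρ x y (θ z) = ρ x y w := by
      rw [← hadd]; exact congrArg (ρ x y) (hS2' w)
    have h2 : ρ y z (S u) + ρ y z (θ x) = ρ y z u := by
      rw [← hadd]; exact congrArg (ρ y z) (hS2' u)
    have h3 : ρ z x (S v) + ρ z x (θ y) = ρ z x v := by
      rw [← hadd]; exact congrArg (ρ z x) (hS2' v)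
    rw [← h1, ← h2, ← h3]; abel
  have hSfin : S (ρ x y w + ρ y z u + ρ z x v + Θ x y z) = P := by
    rw [← hkey]; exact hS1' P
  simp only [LinearMap.comp_apply, ← hx, ← hy, ← hz]
  rw [hSfin, hTP]
end

section
/- Let T be a Θ-twisted O-operator and θ a T-admissible 1-cocycle (Id_V + θ∘T invertible). Then Id_V + θ∘T: (V, [·,·,·]_T) → (V, [·,·,·]_{T_θ}) is an isomorphism of the induced 3-Lie algebra structures, where T_θ = T∘(Id_V + θ∘T)⁻¹. -/
universe u

/-- Id + θ∘T is an isomorphism from (V,[·,·,·]_T) to (V,[·,·,·]_{T_θ}). -/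
theorem stmt7 {K : Type*} [Field K] {A M : Type*} [AddCommGroup A] [Module K A]
    [AddCommGroup M] [Module K M]
    (b : A → A → A → A) (ρ : A → A → M → M) (Θ : A → A → A → M)
    (T : M →ₗ[K] A) (θ : A →ₗ[K] M) (S : M →ₗ[K] M)
    (hb : IsThreeLie K b) (hρ : IsRep K b ρ) (hΘ : IsCocycle K b ρ Θ)
    (hT : IsTwistedO b ρ Θ T)
    (hθ : ∀ x y z : A, ρ x y (θ z) + ρ y z (θ x) + ρ z x (θ y) = θ (b x y z))
    (hS1 : S ∘ₗ ((LinearMap.id : M →ₗ[K] M) + θ ∘ₗ T) = LinearMap.id)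
    (hS2 : ((LinearMap.id : M →ₗ[K] M) + θ ∘ₗ T) ∘ₗ S = LinearMap.id) :
    Function.Bijective (fun v : M => v + θ (T v)) ∧
      ∀ u v w : M,
        indBracket ρ Θ T u v w + θ (T (indBracket ρ Θ T u v w)) =
          indBracket ρ Θ (T ∘ₗ S) (u + θ (T u)) (v + θ (T v)) (w + θ (T w)) := by
  have hL : ∀ v : M, S (v + θ (T v)) = v := fun v => LinearMap.congr_fun hS1 v
  have hR : ∀ v : M, S v + θ (T (S v)) = v := fun v => LinearMap.congr_fun hS2 v
  constructor
  · exact Function.bijective_iff_has_inverse.2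
      ⟨S, fun v => hL v, fun v => hR v⟩
  · intro u v w
    have hadd : ∀ (x y : A) (p q : M), ρ x y (p + q) = ρ x y p + ρ x y q := by
      intro x y p q
      have := hρ.2.2.1 x y 1 p q
      simpa using this
    have hTS : ∀ x : M, (T ∘ₗ S) (x + θ (T x)) = T x := by
      intro x; simp [hL x]
    simp only [indBracket, hTS]
    have hTb : T (ρ (T u) (T v) w + ρ (T v) (T w) u + ρ (T w) (T u) v
        + Θ (T u) (T v) (T w)) = b (T u) (T v) (T w) := (hT u v w).symm
    rw [hTb, ← hθ (T u) (T v) (T w), hadd, hadd, hadd]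
    abel
end

section
/- Let T be a Θ-twisted O-operator. For 𝔛 ∈ g ∧ g define δ(𝔛): V → g by δ(𝔛)(v) = T(ρ(𝔛)v + Θ(𝔛, Tv)) - [𝔛, Tv]_g (with [𝔛,Tv]_g := [x₁,x₂,Tv]_g for 𝔛 = x₁∧x₂). Then δ(𝔛) is a 1-cocycle in the Chevalley-Eilenberg complex of (V, [·,·,·]_T) with coefficients in (g, ρ_Θ), i.e. ∂_Θ δ(𝔛) = 0. -/
universe u

set_option linter.unusedSectionVars false
section Helpers
variable {K : Type*} [Field K] {A N : Type*} [AddCommGroup A] [Module K A]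
  [AddCommGroup N] [Module K N]

theorem lf_add {f : A → A → A → N} (h : LinFst K f) (x x' y z : A) :
    f (x + x') y z = f x y z + f x' y z := by
  simpa using h 1 x x' y z

theorem lf_zero {f : A → A → A → N} (h : LinFst K f) (y z : A) :
    f 0 y z = 0 := by
  have h0 := lf_add h 0 0 y z
  rw [add_zero] at h0
  exact left_eq_add.mp h0

theorem lf_neg {f : A → A → A → N} (h : LinFst K f) (x y z : A) :
    f (-x) y z = - f x y z := by
  have h0 := h (-1) x 0 y z
  simpa [lf_zero h] using h0

theorem lf_sub {f : A → A → A → N} (h : LinFst K f) (x x' y z : A) :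
    f (x - x') y z = f x y z - f x' y z := by
  rw [sub_eq_add_neg, lf_add h, lf_neg h, ← sub_eq_add_neg]

theorem skew_cyc {f : A → A → A → N} (h12 : Skew12 f) (h23 : Skew23 f)
    (x y z : A) : f x y z = f z x y := by
  rw [h23, h12, neg_neg]

theorem skew_cyc2 {f : A → A → A → N} (h12 : Skew12 f) (h23 : Skew23 f)
    (x y z : A) : f x y z = f y z x :=
  (skew_cyc h12 h23 x y z).trans (skew_cyc h12 h23 z x y)

theorem lf_add2 {f : A → A → A → N} (h : LinFst K f) (h12 : Skew12 f)
    (x y y' z : A) : f x (y + y') z = f x y z + f x y' z := by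
  rw [h12 x (y + y') z, lf_add h, neg_add, ← h12, ← h12]

theorem lf_sub2 {f : A → A → A → N} (h : LinFst K f) (h12 : Skew12 f)
    (x y y' z : A) : f x (y - y') z = f x y z - f x y' z := by
  rw [h12 x (y - y') z, lf_sub h, neg_sub, h12 y x z, h12 y' x z]; abel

theorem lf_add3 {f : A → A → A → N} (h : LinFst K f) (h12 : Skew12 f)
    (h23 : Skew23 f) (x y z z' : A) : f x y (z + z') = f x y z + f x y z' := by
  rw [skew_cyc h12 h23 x y (z + z'), lf_add h, ← skew_cyc h12 h23 x y z,
    ← skew_cyc h12 h23 x y z']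

theorem lf_sub3 {f : A → A → A → N} (h : LinFst K f) (h12 : Skew12 f)
    (h23 : Skew23 f) (x y z z' : A) : f x y (z - z') = f x y z - f x y z' := by
  rw [skew_cyc h12 h23 x y (z - z'), lf_sub h, ← skew_cyc h12 h23 x y z,
    ← skew_cyc h12 h23 x y z']

end Helpers

/-- δ(𝔛) is a 1-cocycle of (V,[·,·,·]_T) with coefficients in (g,ρ_Θ). -/
theorem stmt9 {K : Type*} [Field K] {A M : Type*} [AddCommGroup A] [Module K A]
    [AddCommGroup M] [Module K M]
    (b : A → A → A → A) (ρ : A → A → M → M) (Θ : A → A → A → M) (T : M →ₗ[K] A)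
    (hb : IsThreeLie K b) (hρ : IsRep K b ρ) (hΘ : IsCocycle K b ρ Θ)
    (hT : IsTwistedO b ρ Θ T)
    (x1 x2 : A) (δ : M → A)
    (hδ : ∀ v : M, δ v = T (ρ x1 x2 v + Θ x1 x2 (T v)) - b x1 x2 (T v)) :
    ∀ u v w : M,
      b (T u) (T v) (δ w) + b (δ u) (T v) (T w) + b (T u) (δ v) (T w)
        - δ (indBracket ρ Θ T u v w)
        - T (ρ (T v) (δ w) u + ρ (δ w) (T u) v + Θ (δ w) (T u) (T v))
        - T (ρ (T w) (δ u) v + ρ (δ u) (T v) w + Θ (δ u) (T v) (T w))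
        - T (ρ (T u) (δ v) w + ρ (δ v) (T w) u + Θ (δ v) (T w) (T u)) = 0 := by
  obtain ⟨bl, b12, b23, bF⟩ := hb
  obtain ⟨r1, r12, rM, r4, _r5⟩ := hρ
  obtain ⟨t1, t12, t23, tC⟩ := hΘ
  intro u v w
  have rAdd1 : ∀ (x x' y : A) (m : M), ρ (x + x') y m = ρ x y m + ρ x' y m :=
    fun x x' y m => by simpa using r1 1 x x' y m
  have rZero1 : ∀ (y : A) (m : M), ρ 0 y m = 0 := fun y m => by
    have h0 := rAdd1 0 0 y m; rw [add_zero] at h0; exact left_eq_add.mp h0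
  have rNeg1 : ∀ (x y : A) (m : M), ρ (-x) y m = - ρ x y m := fun x y m => by
    have h0 := r1 (-1) x 0 y m; simpa [rZero1] using h0
  have rSub1 : ∀ (x x' y : A) (m : M), ρ (x - x') y m = ρ x y m - ρ x' y m :=
    fun x x' y m => by rw [sub_eq_add_neg, rAdd1, rNeg1, ← sub_eq_add_neg]
  have rAdd2 : ∀ (x y y' : A) (m : M), ρ x (y + y') m = ρ x y m + ρ x y' m :=
    fun x y y' m => by
      rw [r12 x (y + y') m, rAdd1, neg_add, ← r12 x y m, ← r12 x y' m]
  have rSub2 : ∀ (x y y' : A) (m : M), ρ x (y - y') m = ρ x y m - ρ x y' m :=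
    fun x y y' m => by
      rw [r12 x (y - y') m, rSub1, neg_sub, r12 y x m, r12 y' x m]; abel
  have rAdd3 : ∀ (x y : A) (m m' : M), ρ x y (m + m') = ρ x y m + ρ x y m' :=
    fun x y m m' => by simpa using rM x y 1 m m'
  have eC : ρ x1 x2 (Θ (T u) (T v) (T w)) =
      Θ (b x1 x2 (T u)) (T v) (T w) + Θ (T u) (b x1 x2 (T v)) (T w)
        + Θ (T u) (T v) (b x1 x2 (T w)) + ρ (T v) (T w) (Θ x1 x2 (T u))
        + ρ (T w) (T u) (Θ x1 x2 (T v)) + ρ (T u) (T v) (Θ x1 x2 (T w))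
        - Θ x1 x2 (b (T u) (T v) (T w)) :=
    eq_sub_of_add_eq' (tC x1 x2 (T u) (T v) (T w))
  rw [hδ u, hδ v, hδ w, hδ (indBracket ρ Θ T u v w)]
  simp only [indBracket]
  rw [← hT u v w]
  rw [lf_sub3 bl b12 b23 (T u) (T v) (T (ρ x1 x2 w + Θ x1 x2 (T w)))
        (b x1 x2 (T w)),
      lf_sub bl (T (ρ x1 x2 u + Θ x1 x2 (T u))) (b x1 x2 (T u)) (T v) (T w),
      lf_sub2 bl b12 (T u) (T (ρ x1 x2 v + Θ x1 x2 (T v))) (b x1 x2 (T v))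
        (T w)]
  rw [hT u v (ρ x1 x2 w + Θ x1 x2 (T w)),
      hT (ρ x1 x2 u + Θ x1 x2 (T u)) v w,
      hT u (ρ x1 x2 v + Θ x1 x2 (T v)) w]
  rw [bF x1 x2 (T u) (T v) (T w)]
  simp only [map_add, map_sub,
    lf_add bl, lf_sub bl, lf_add2 bl b12, lf_sub2 bl b12,
    lf_add3 bl b12 b23, lf_sub3 bl b12 b23,
    lf_add t1, lf_sub t1, lf_add2 t1 t12, lf_sub2 t1 t12,
    lf_add3 t1 t12 t23, lf_sub3 t1 t12 t23,
    rAdd1, rSub1, rAdd2, rSub2, rAdd3]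
  rw [r4 x1 x2 (T u) (T v) w, r4 x1 x2 (T v) (T w) u, r4 x1 x2 (T w) (T u) v,
      eC]
  simp only [map_add, map_sub]
  rw [skew_cyc2 t12 t23 (T (ρ x1 x2 w)) (T u) (T v),
      skew_cyc2 t12 t23 (T (Θ x1 x2 (T w))) (T u) (T v),
      skew_cyc2 t12 t23 (b x1 x2 (T w)) (T u) (T v),
      skew_cyc t12 t23 (T (ρ x1 x2 v)) (T w) (T u),
      skew_cyc t12 t23 (T (Θ x1 x2 (T v))) (T w) (T u),
      skew_cyc t12 t23 (b x1 x2 (T v)) (T w) (T u)]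
  abel
end

section
/- If T_t = T + tT₁ is an infinitesimal deformation of a Θ-twisted O-operator T (i.e. T + tT₁ is a Θ-twisted O-operator for all t), then T₁ is a 1-cocycle: for all u,v,w ∈ V, [Tu,Tv,T₁w] + [Tu,T₁v,Tw] + [T₁u,Tv,Tw] = T(ρ(Tu,T₁v)w + ρ(T₁u,Tv)w + ρ(Tv,T₁w)u + ρ(T₁v,Tw)u + ρ(Tw,T₁u)v + ρ(T₁w,Tu)v + Θ(Tu,Tv,T₁w) + Θ(Tu,T₁v,Tw) + Θ(T₁u,Tv,Tw)) + T₁(ρ(Tu,Tv)w + ρ(Tv,Tw)u + ρ(Tw,Tu)v + Θ(Tu,Tv,Tw)). -/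
universe u

lemma quartic_aux {K M : Type*} [Field K] [CharZero K] [AddCommGroup M] [Module K M]
    (c0 c1 c2 c3 c4 : M)
    (h : ∀ t : K, c0 + t • c1 + t ^ 2 • c2 + t ^ 3 • c3 + t ^ 4 • c4 = 0) :
    c1 = 0 := by
  have e1 := h 1
  have em1 := h (-1)
  have e2 := h 2
  have em2 := h (-2)
  linear_combination (norm := module) ((2:K)/3) • e1 - ((2:K)/3) • em1
    - ((1:K)/12) • e2 + ((1:K)/12) • em2

section slotsAux
variable {K : Type*} [Field K] {A M : Type*} [AddCommGroup A] [Module K A]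
    [AddCommGroup M] [Module K M]

lemma slot1_aux {f : A → A → A → M} (h1 : LinFst K f) (t : K) (x x' y z : A) :
    f (x + t • x') y z = f x y z + t • f x' y z := by
  rw [add_comm x, h1, add_comm]

lemma slot2_aux {f : A → A → A → M} (h1 : LinFst K f) (h12 : Skew12 f)
    (t : K) (x y y' z : A) :
    f x (y + t • y') z = f x y z + t • f x y' z := by
  rw [h12 x, slot1_aux h1, h12 y x z, h12 y' x z]
  module

lemma slot3_aux {f : A → A → A → M} (h1 : LinFst K f) (h12 : Skew12 f) (h23 : Skew23 f)
    (t : K) (x y z z' : A) :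
    f x y (z + t • z') = f x y z + t • f x y z' := by
  rw [h23 x, slot2_aux h1 h12, h23 x y z, h23 x y z']
  module

end slotsAux

/-- the generator T₁ of an infinitesimal deformation of T is a 1-cocycle. -/
theorem stmt10 {K : Type*} [Field K] [CharZero K] {A M : Type*}
    [AddCommGroup A] [Module K A] [AddCommGroup M] [Module K M]
    (b : A → A → A → A) (ρ : A → A → M → M) (Θ : A → A → A → M)
    (T T₁ : M →ₗ[K] A)
    (hb : IsThreeLie K b) (hρ : IsRep K b ρ) (hΘ : IsCocycle K b ρ Θ)
    (hdef : ∀ t : K, IsTwistedO b ρ Θ (T + t • T₁)) :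
    ∀ u v w : M,
      b (T u) (T v) (T₁ w) + b (T u) (T₁ v) (T w) + b (T₁ u) (T v) (T w) =
        T (ρ (T u) (T₁ v) w + ρ (T₁ u) (T v) w + ρ (T v) (T₁ w) u
            + ρ (T₁ v) (T w) u + ρ (T w) (T₁ u) v + ρ (T₁ w) (T u) v
            + Θ (T u) (T v) (T₁ w) + Θ (T u) (T₁ v) (T w) + Θ (T₁ u) (T v) (T w))
          + T₁ (ρ (T u) (T v) w + ρ (T v) (T w) u + ρ (T w) (T u) v
            + Θ (T u) (T v) (T w)) := by
  intro u v w
  obtain ⟨bl, b12, b23, _⟩ := hb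
  obtain ⟨rl, rsk, _, _, _⟩ := hρ
  obtain ⟨θl, θ12, θ23, _⟩ := hΘ
  have rS1 : ∀ (t : K) (x x' y : A) (m : M),
      ρ (x + t • x') y m = ρ x y m + t • ρ x' y m := fun t x x' y m => by
    rw [add_comm x, rl, add_comm]
  have rS2 : ∀ (t : K) (x y y' : A) (m : M),
      ρ x (y + t • y') m = ρ x y m + t • ρ x y' m := fun t x y y' m => by
    rw [rsk x, rS1, rsk y x m, rsk y' x m]; module
  have key : ∀ t : K,
      (b (T u) (T v) (T w)
        - (T (ρ (T u) (T v) w) + T (ρ (T v) (T w) u) + T (ρ (T w) (T u) v)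
            + T (Θ (T u) (T v) (T w))))
      + t • (b (T u) (T v) (T₁ w) + b (T u) (T₁ v) (T w) + b (T₁ u) (T v) (T w)
        - (T (ρ (T u) (T₁ v) w) + T (ρ (T₁ u) (T v) w) + T (ρ (T v) (T₁ w) u)
            + T (ρ (T₁ v) (T w) u) + T (ρ (T w) (T₁ u) v) + T (ρ (T₁ w) (T u) v)
            + T (Θ (T u) (T v) (T₁ w)) + T (Θ (T u) (T₁ v) (T w)) + T (Θ (T₁ u) (T v) (T w))
            + T₁ (ρ (T u) (T v) w) + T₁ (ρ (T v) (T w) u) + T₁ (ρ (T w) (T u) v)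
            + T₁ (Θ (T u) (T v) (T w))))
      + t ^ 2 • (b (T u) (T₁ v) (T₁ w) + b (T₁ u) (T v) (T₁ w) + b (T₁ u) (T₁ v) (T w)
        - (T (ρ (T₁ u) (T₁ v) w) + T (ρ (T₁ v) (T₁ w) u) + T (ρ (T₁ w) (T₁ u) v)
            + T (Θ (T u) (T₁ v) (T₁ w)) + T (Θ (T₁ u) (T v) (T₁ w)) + T (Θ (T₁ u) (T₁ v) (T w))
            + T₁ (ρ (T u) (T₁ v) w) + T₁ (ρ (T₁ u) (T v) w) + T₁ (ρ (T v) (T₁ w) u)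
            + T₁ (ρ (T₁ v) (T w) u) + T₁ (ρ (T w) (T₁ u) v) + T₁ (ρ (T₁ w) (T u) v)
            + T₁ (Θ (T u) (T v) (T₁ w)) + T₁ (Θ (T u) (T₁ v) (T w)) + T₁ (Θ (T₁ u) (T v) (T w))))
      + t ^ 3 • (b (T₁ u) (T₁ v) (T₁ w)
        - (T (Θ (T₁ u) (T₁ v) (T₁ w))
            + T₁ (ρ (T₁ u) (T₁ v) w) + T₁ (ρ (T₁ v) (T₁ w) u) + T₁ (ρ (T₁ w) (T₁ u) v)
            + T₁ (Θ (T u) (T₁ v) (T₁ w)) + T₁ (Θ (T₁ u) (T v) (T₁ w))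
            + T₁ (Θ (T₁ u) (T₁ v) (T w))))
      + t ^ 4 • (- T₁ (Θ (T₁ u) (T₁ v) (T₁ w))) = 0 := by
    intro t
    have h := hdef t u v w
    simp only [LinearMap.add_apply, LinearMap.smul_apply] at h
    simp only [slot1_aux bl, slot2_aux bl b12, slot3_aux bl b12 b23, rS1, rS2,
      slot1_aux θl, slot2_aux θl θ12, slot3_aux θl θ12 θ23, map_add, map_smul] at h
    linear_combination (norm := module) h
  have hc1 := quartic_aux _ _ _ _ _ key
  simp only [map_add]
  linear_combination (norm := module) hc1
end

section
/- Let (A, {·,·,·}, [[·,·,·]]) be a 3-NS-Lie algebra. Then the bracket [x,y,z]_* := {x,y,z} + {y,z,x} + {z,x,y} + [[x,y,z]] defines a 3-Lie algebra structure on A (the subadjacent 3-Lie algebra). -/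
universe u

/-- the subadjacent bracket of a 3-NS-Lie algebra is a 3-Lie algebra. -/
theorem stmt11 {K : Type*} [Field K] {A : Type*} [AddCommGroup A] [Module K A]
    (m n : A → A → A → A) (h : IsThreeNS K m n) :
    IsThreeLie K (nsStar m n) := by
  obtain ⟨hm1, hm3, hmsk, hn1, hn12, hn23, hI, hII, hIII⟩ := h
  have madd1 : ∀ x x' y z : A, m (x + x') y z = m x y z + m x' y z := by
    intro x x' y z; have := hm1 1 x x' y z; simpa using this
  have madd3 : ∀ x y z z' : A, m x y (z + z') = m x y z + m x y z' := by
    intro x y z z'; have := hm3 1 x y z z'; simpa using this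
  have madd2 : ∀ x y y' z : A, m x (y + y') z = m x y z + m x y' z := by
    intro x y y' z
    rw [hmsk x (y + y') z, madd1 y y' x z, hmsk y x z, hmsk y' x z]; abel
  have nadd1 : ∀ x x' y z : A, n (x + x') y z = n x y z + n x' y z := by
    intro x x' y z; have := hn1 1 x x' y z; simpa using this
  have nadd2 : ∀ x y y' z : A, n x (y + y') z = n x y z + n x y' z := by
    intro x y y' z
    rw [hn12 x (y + y') z, nadd1 y y' x z, hn12 y x z, hn12 y' x z]; abel
  have nadd3 : ∀ x y z z' : A, n x y (z + z') = n x y z + n x y z' := by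
    intro x y z z'
    rw [hn23 x y (z + z'), nadd2 x z z' y, hn23 x z y, hn23 x z' y]; abel
  have mzero1 : ∀ y z : A, m 0 y z = 0 := by
    intro y z; have := hm1 1 0 0 y z; simpa using this
  have mneg1 : ∀ x y z : A, m (-x) y z = - m x y z := by
    intro x y z
    have h0 := madd1 x (-x) y z
    rw [add_neg_cancel, mzero1] at h0
    linear_combination (norm := abel1) -h0
  have mneg2 : ∀ x y z : A, m x (-y) z = - m x y z := by
    intro x y z
    rw [hmsk x (-y) z, mneg1 y x z, hmsk y x z]; abel
  have mzero3 : ∀ x y : A, m x y 0 = 0 := by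
    intro x y; have := hm3 1 x y 0 0; simpa using this
  have mneg3 : ∀ x y z : A, m x y (-z) = - m x y z := by
    intro x y z
    have h0 := madd3 x y z (-z)
    rw [add_neg_cancel, mzero3] at h0
    linear_combination (norm := abel1) -h0
  have hn13 : ∀ x y z : A, n x y z = - n z y x := by
    intro x y z
    rw [hn23 x y z, hn12 x z y, hn23 z x y]; abel
  have hm2s : ∀ (a : K) (x y y' z : A), m x (a • y + y') z = a • m x y z + m x y' z := by
    intro a x y y' z
    rw [hmsk x (a • y + y') z, hm1 a y y' x z, hmsk y x z, hmsk y' x z]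
    module
  refine ⟨?_, ?_, ?_, ?_⟩
  · intro a x x' y z
    simp only [nsStar, cycSum]
    rw [hm1 a x x' y z, hm3 a y z x x', hm2s a z x x' y, hn1 a x x' y z]
    module
  · intro x y z
    simp only [nsStar, cycSum]
    rw [hmsk x y z, hmsk y z x, hmsk z x y, hn12 x y z]
    abel
  · intro x y z
    simp only [nsStar, cycSum]
    rw [hmsk x y z, hmsk z x y, hmsk y z x, hn23 x y z]
    abel
  · intro x1 x2 x3 x4 x5
    have tI_12345 := hI x1 x2 x3 x4 x5
    have tIII_12345 := hIII x1 x2 x3 x4 x5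
    have tI_12354 := hI x1 x2 x3 x5 x4
    have tI_12453 := hI x1 x2 x4 x5 x3
    have tI_13452 := hI x1 x3 x4 x5 x2
    have tII_13542 := hII x1 x3 x5 x4 x2
    have tI_23451 := hI x2 x3 x4 x5 x1
    have tII_23541 := hII x2 x3 x5 x4 x1
    have tI_34152 := hI x3 x4 x1 x5 x2
    have tI_34251 := hI x3 x4 x2 x5 x1
    simp only [nsStar, cycSum, madd1, madd2, madd3, nadd1, nadd2, nadd3] at tI_12345 tIII_12345 tI_12354 tI_12453 tI_13452 tII_13542 tI_23451 tII_23541 tI_34152 tI_34251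
    have s1 : m (n x1 x3 x4) x5 x2 = - m (n x1 x4 x3) x5 x2 := by rw [hn23 x1 x3 x4, mneg1]
    have s2 : m (n x1 x4 x3) x5 x2 = - m (n x3 x4 x1) x5 x2 := by rw [hn13 x1 x4 x3, mneg1]
    have s3 : m (n x2 x3 x4) x5 x1 = - m (n x2 x4 x3) x5 x1 := by rw [hn23 x2 x3 x4, mneg1]
    have s4 : m (n x2 x4 x3) x5 x1 = - m (n x3 x4 x2) x5 x1 := by rw [hn13 x2 x4 x3, mneg1]
    have s5 : m x1 x2 (m x3 x5 x4) = - m x1 x2 (m x5 x3 x4) := by rw [hmsk x3 x5 x4, mneg3]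
    have s6 : m x1 x3 (m x4 x5 x2) = - m x1 x3 (m x5 x4 x2) := by rw [hmsk x4 x5 x2, mneg3]
    have s7 : m x2 x3 (m x4 x5 x1) = - m x2 x3 (m x5 x4 x1) := by rw [hmsk x4 x5 x1, mneg3]
    have s8 : m x3 x4 (m x1 x5 x2) = - m x3 x4 (m x5 x1 x2) := by rw [hmsk x1 x5 x2, mneg3]
    have s9 : m x3 x5 (m x1 x4 x2) = - m x3 x5 (m x4 x1 x2) := by rw [hmsk x1 x4 x2, mneg3]
    have s10 : m x4 x5 (m x1 x3 x2) = - m x4 x5 (m x3 x1 x2) := by rw [hmsk x1 x3 x2, mneg3]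
    simp only [nsStar, cycSum, madd1, madd2, madd3, nadd1, nadd2, nadd3]
    linear_combination (norm := abel1) - hmsk (m x1 x2 x3) x5 x4 - hmsk (m x1 x2 x5) x3 x4 - hmsk (m x1 x3 x5) x4 x2 - hmsk (m x2 x3 x1) x5 x4 + hmsk (m x2 x3 x5) x4 x1 - hmsk (m x2 x5 x1) x3 x4 - hmsk (m x3 x1 x2) x5 x4 + hmsk (m x3 x4 x5) x1 x2 - hmsk (m x3 x5 x1) x4 x2 + hmsk (m x3 x5 x2) x4 x1 + hmsk (m x4 x5 x3) x1 x2 - hmsk (m x5 x1 x2) x3 x4 - hmsk (m x5 x1 x3) x4 x2 + hmsk (m x5 x2 x3) x4 x1 + hmsk (m x5 x3 x4) x1 x2 - hmsk (n x1 x2 x3) x5 x4 - hmsk (n x1 x2 x5) x3 x4 - s1 - hmsk (n x1 x3 x5) x4 x2 + s2 + s3 + hmsk (n x2 x3 x5) x4 x1 - s4 + hmsk (n x3 x4 x5) x1 x2 + s5 + s6 + hmsk x1 x5 (m x3 x4 x2) - s7 - hmsk x2 x5 (m x3 x4 x1) - s8 - hmsk x3 x5 (m x1 x2 x4) + s9 -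 hmsk x3 x5 (m x2 x4 x1) - hmsk x3 x5 (m x4 x1 x2) - s10 + tI_12345 + tIII_12345 - tI_12354 + tI_12453 - tI_13452 + tII_13542 + tI_23451 - tII_23541 + tI_34152 - tI_34251
end

section
/- Let N: g → g be a Nijenhuis operator on a 3-Lie algebra g. Then {x,y,z} := [Nx,Ny,z]_g and [[x,y,z]] := -N([Nx,y,z]_g + [x,Ny,z]_g + [x,y,Nz]_g - N[x,y,z]_g) define a 3-NS-Lie algebra structure on g. -/
universe u

set_option maxHeartbeats 4000000 in
/-- a Nijenhuis operator on a 3-Lie algebra induces a 3-NS-Lie algebra. -/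
theorem stmt12 {K : Type*} [Field K] {A : Type*} [AddCommGroup A] [Module K A]
    (b : A → A → A → A) (N : A →ₗ[K] A)
    (hb : IsThreeLie K b) (hN : IsNijenhuis b N) :
    IsThreeNS K (fun x y z => b (N x) (N y) z)
      (fun x y z => - N (b (N x) y z + b x (N y) z + b x y (N z)
        - N (b x y z))) := by
  obtain ⟨hlin, p12, p23, hFil⟩ := hb
  have pc : ∀ u v w, b u v w = b v w u := by
    intro u v w; rw [p12 u v w, p23 v u w]; abel
  have pc2 : ∀ u v w, b u v w = b w u v := by
    intro u v w; rw [pc u v w, pc v w u]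
  have p13 : ∀ u v w, b u v w = - b w v u := by
    intro u v w; rw [pc u v w, p12 v w u]
  have badd1 : ∀ x x' y z, b (x + x') y z = b x y z + b x' y z := by
    intro x x' y z; have h := hlin 1 x x' y z; simpa using h
  have b0 : ∀ y z, b 0 y z = 0 := by
    intro y z
    have h := badd1 0 0 y z
    simp only [add_zero] at h
    exact (left_eq_add.mp h)
  have bneg1 : ∀ x y z, b (-x) y z = - b x y z := by
    intro x y z
    have h := badd1 x (-x) y z
    rw [add_neg_cancel, b0] at h
    exact eq_neg_of_add_eq_zero_right h.symm
  have bsmul1 : ∀ (a : K) (x y z : A), b (a • x) y z = a • b x y z := by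
    intro a x y z; have h := hlin a x 0 y z; simpa [b0] using h
  have bsub1 : ∀ x x' y z, b (x - x') y z = b x y z - b x' y z := by
    intro x x' y z; rw [sub_eq_add_neg, badd1, bneg1, sub_eq_add_neg]
  have badd2 : ∀ x y y' z, b x (y + y') z = b x y z + b x y' z := by
    intro x y y' z; rw [p12 x (y + y') z, badd1, p12 y x z, p12 y' x z]; abel
  have bneg2 : ∀ x y z, b x (-y) z = - b x y z := by
    intro x y z; rw [p12 x (-y) z, bneg1, p12 y x z]; abel
  have bsmul2 : ∀ (a : K) (x y z : A), b x (a • y) z = a • b x y z := by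
    intro a x y z; rw [p12 x (a • y) z, bsmul1, p12 y x z, smul_neg, neg_neg]
  have bsub2 : ∀ x y y' z, b x (y - y') z = b x y z - b x y' z := by
    intro x y y' z; rw [sub_eq_add_neg, badd2, bneg2, sub_eq_add_neg]
  have badd3 : ∀ x y z z', b x y (z + z') = b x y z + b x y z' := by
    intro x y z z'; rw [p13 x y (z + z'), badd1, p13 z y x, p13 z' y x]; abel
  have bneg3 : ∀ x y z, b x y (-z) = - b x y z := by
    intro x y z; rw [p13 x y (-z), bneg1, p13 z y x]; abel
  have bsmul3 : ∀ (a : K) (x y z : A), b x y (a • z) = a • b x y z := by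
    intro a x y z; rw [p13 x y (a • z), bsmul1, p13 z y x, smul_neg, neg_neg]
  have bsub3 : ∀ x y z z', b x y (z - z') = b x y z - b x y z' := by
    intro x y z z'; rw [sub_eq_add_neg, badd3, bneg3, sub_eq_add_neg]
  refine ⟨?_, ?_, ?_, ?_, ?_, ?_, ?_, ?_, ?_⟩
  · intro a x x' y z
    show b (N (a • x + x')) (N y) z
        = a • b (N x) (N y) z + b (N x') (N y) z
    rw [map_add, map_smul, badd1, bsmul1]
  · intro a x y z z'
    show b (N x) (N y) (a • z + z') = a • b (N x) (N y) z + b (N x) (N y) z'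
    rw [badd3, bsmul3]
  · intro x y z
    exact p12 (N x) (N y) z
  · intro a x x' y z
    simp only [map_add, map_smul, map_sub, map_neg, badd1, bsmul1, bsub1, bneg1]
    module
  · intro x y z
    linear_combination (norm := (simp only [map_add, map_sub, map_neg]; abel1))
      (-1 : ℤ) • congrArg (⇑N) (p12 (N x) y z)
      - congrArg (⇑N) (p12 x (N y) z) - congrArg (⇑N) (p12 x y (N z))
      + congrArg (⇑N) (congrArg (⇑N) (p12 x y z))
  · intro x y z
    linear_combination (norm := (simp only [map_add, map_sub, map_neg]; abel1))
      (-1 : ℤ) • congrArg (⇑N) (p23 (N x) y z)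
      - congrArg (⇑N) (p23 x (N y) z) - congrArg (⇑N) (p23 x y (N z))
      + congrArg (⇑N) (congrArg (⇑N) (p23 x y z))
  · intro x1 x2 x3 x4 x5
    linear_combination (norm := (simp only [cycSum, nsStar, map_add, map_sub, map_neg, badd1, bneg1, bsub1, badd2, bneg2, bsub2, badd3, bneg3, bsub3]; abel1))
      -(congrArg (fun t => b t (N x3) x5) (hN x1 x2 x4)) + (hFil (N x1) (N x2) (N x3) (N x4) x5) + (congrArg (fun t => b t (N x4) x5) (hN x1 x2 x3)) - (congrArg (fun t => b t (N x4) x5) (congrArg (⇑N) (pc2 (N x2) (N x3) x1))) - (congrArg (fun t => b t (N x4) x5) (congrArg (⇑N) (pc (N x3) (N x1) x2))) - (p12 (N x3) (N (b (N x1) (N x2) x4)) x5) - (congrArg (fun t => b (N x3) t x5) (congrArg (⇑N) (pc2 (N x2) (N x4) x1))) - (congrArg (fun t => b (N x3) t x5) (congrArg (⇑N) (pc (N x4) (N x1) x2))) + (p12 (N x3) (N (N (b (N x1) x2 x4))) x5) + (p12 (N x3) (N (N (b x1 (N x2) x4))) x5) + (p12 (N x3) (N (N (b x1 x2 (N x4))))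 x5) - (p12 (N x3) (N (N (N (b x1 x2 x4)))) x5) + (p12 (N x3) (b (N x1) (N x2) (N x4)) x5) - (p12 (N x3) (N (b x1 (N x2) (N x4))) x5) - (p12 (N x3) (N (b (N x1) x2 (N x4))) x5)
  · intro x1 x2 x3 x4 x5
    linear_combination (norm := (simp only [cycSum, nsStar, map_add, map_sub, map_neg, badd1, bneg1, bsub1, badd2, bneg2, bsub2, badd3, bneg3, bsub3]; abel1))
      -(congrArg (fun t => b t (N x4) x5) (hN x1 x2 x3)) + (hFil (N x1) (N x3) (N x2) (N x4) x5) - (hFil (N x1) x5 (N x2) (N x3) (N x4)) + (hFil (N x1) (N x4) (N x2) (N x3) x5) - (hFil (N x1) (N x2) (N x3) (N x4) x5) + (hFil (N x2) (N x3) (N x1) (N x4) x5) + (congrArg (fun t => b t (N x4) x5) (congrArg (⇑N) (pc2 (N x2) (N x3) x1))) + (congrArg (fun t => b t (N x4) x5) (congrArg (⇑N) (pc (N x3) (N x1) x2))) - (p13 (N x3) (N x1) (b (N x2) (N x4) x5)) - (pc2 (N x1) (N x3) (b (N x2) (N x4) x5)) + (congrArg (fun t => b t (N x4) x5) (p23 (N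 x1) (N x3) (N x2))) + (p12 (N x2) (b (N x1) (N x3) (N x4)) x5) + (pc2 (N x2) (N x4) (b (N x1) (N x3) x5)) + (pc2 (N x1) x5 (b (N x2) (N x3) (N x4))) - (congrArg (fun t => b t (N x3) (N x4)) (p23 (N x1) x5 (N x2))) - (congrArg (fun t => b (N x2) t (N x4)) (p23 (N x1) x5 (N x3))) - (congrArg (fun t => b (N x2) (N x3) t) (p23 (N x1) x5 (N x4))) + (congrArg (fun t => b t (N x3) x5) (p23 (N x1) (N x4) (N x2))) + (congrArg (fun t => b (N x2) t x5) (p23 (N x1) (N x4) (N x3))) - (p12 (N x3) (b (N x1) (N x2) (N x4)) x5) - (pc2 (N x3) (N x4) (b (N x1) (N x2) x5)) + (congrArg (fun t => b t (N x4) x5) (pc2 (N x2) (N x3) (N x1))) + (p12 (N x1) (b (N x2) (N x3) (N x4)) x5) + (p12 (N x2) (b (N x1) (N x3) x5) (N x4)) - (p12 (N x2) (b (N x1) (N x3) (N x4)) x5)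
  · intro x1 x2 x3 x4 x5
    linear_combination (norm := (simp only [cycSum, nsStar, map_add, map_sub, map_neg, badd1, bneg1, bsub1, badd2, bneg2, bsub2, badd3, bneg3, bsub3]; abel1))
      (hN x4 x5 (b x1 x2 (N x3))) - (hN x3 x5 (b x1 x2 (N x4))) + (hN x3 x4 (b x1 x2 (N x5))) + (hN x4 x5 (b x1 (N x2) x3)) - (hN x3 x5 (b x1 (N x2) x4)) + (hN x3 x4 (b x1 (N x2) x5)) + (hN x4 x5 (b (N x1) x2 x3)) - (hN x3 x5 (b (N x1) x2 x4)) + (hN x3 x4 (b (N x1) x2 x5)) - (hN x1 x2 (b x3 x4 (N x5))) - (hN x1 x2 (b x3 (N x4) x5)) - (hN x1 x2 (b (N x3) x4 x5)) - (hN x4 x5 (N (b x1 x2 x3))) + (hN x3 x5 (N (b x1 x2 x4))) - (hN x3 x4 (N (b x1 x2 x5))) + (hN x1 x2 (N (b x3 x4 x5))) - (congrArg (⇑N) (hFil x1 x2 (N x3) (N x4) (N x5))) - (congrArg (⇑N) (hFil x1 (N x2) x3 (N x4) (N x5))) - (congrArg (⇑N) (hFil x1 (N x2) (N x3) x4 (N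 x5))) - (congrArg (⇑N) (hFil x1 (N x2) (N x3) (N x4) x5)) - (congrArg (⇑N) (hFil (N x1) x2 x3 (N x4) (N x5))) - (congrArg (⇑N) (hFil (N x1) x2 (N x3) x4 (N x5))) - (congrArg (⇑N) (hFil (N x1) x2 (N x3) (N x4) x5)) - (congrArg (⇑N) (hFil (N x1) (N x2) (N x3) x4 x5)) - (congrArg (⇑N) (hFil (N x1) (N x2) x3 (N x4) x5)) - (congrArg (⇑N) (hFil (N x1) (N x2) x3 x4 (N x5))) + (congrArg (⇑N) (congrArg (fun t => b t x3 x5) (hN x1 x2 x4))) - (congrArg (⇑N) (congrArg (fun t => b t x3 x4) (hN x1 x2 x5))) - (congrArg (⇑N) (congrArg (fun t => b t x4 x5) (hN x1 x2 x3))) + (congrArg (⇑N) (congrArg (fun t => b t x1 x2) (hN x3 x4 x5))) - (congrArg (⇑N) (hN x4 x5 (b x1 x2 x3))) + (congrArg (⇑N) (hN x3 x5 (b x1 x2 x4))) - (congrArg (⇑N) (hN x3 x4 (b x1 x2 x5))) + (congrArg (⇑N) (hN x1 x2 (b x3 x4 x5))) + (congrArg (⇑N) (congrArg (⇑N) (hFil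 x1 x2 x3 (N x4) (N x5)))) + (congrArg (⇑N) (congrArg (⇑N) (hFil x1 x2 (N x3) x4 (N x5)))) + (congrArg (⇑N) (congrArg (⇑N) (hFil x1 x2 (N x3) (N x4) x5))) + (congrArg (⇑N) (congrArg (⇑N) (hFil x1 (N x2) x3 x4 (N x5)))) + (congrArg (⇑N) (congrArg (⇑N) (hFil x1 (N x2) x3 (N x4) x5))) + (congrArg (⇑N) (congrArg (⇑N) (hFil x1 (N x2) (N x3) x4 x5))) + (congrArg (⇑N) (congrArg (⇑N) (hFil (N x1) x2 x3 x4 (N x5)))) + (congrArg (⇑N) (congrArg (⇑N) (hFil (N x1) x2 x3 (N x4) x5))) + (congrArg (⇑N) (congrArg (⇑N) (hFil (N x1) x2 (N x3) x4 x5))) + (congrArg (⇑N) (congrArg (⇑N) (hFil (N x1) (N x2) x3 x4 x5))) - (congrArg (⇑N) (congrArg (⇑N) (congrArg (⇑N) (hFil x1 x2 x3 x4 (N x5))))) - (congrArg (⇑N) (congrArg (⇑N) (congrArg (⇑N) (hFil x1 x2 x3 (N x4) x5)))) - (congrArg (⇑N) (congrArg (⇑N) (congrArg (⇑N) (hFil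 x1 x2 (N x3) x4 x5)))) - (congrArg (⇑N) (congrArg (⇑N) (congrArg (⇑N) (hFil x1 (N x2) x3 x4 x5)))) - (congrArg (⇑N) (congrArg (⇑N) (congrArg (⇑N) (hFil (N x1) x2 x3 x4 x5)))) + (congrArg (⇑N) (congrArg (⇑N) (congrArg (⇑N) (congrArg (⇑N) (hFil x1 x2 x3 x4 x5))))) - (congrArg (⇑N) (congrArg (fun t => b (N x1) x2 t) (pc2 (N x4) (N x5) x3))) - (congrArg (⇑N) (congrArg (fun t => b (N x1) x2 t) (pc (N x5) (N x3) x4))) - (congrArg (⇑N) (congrArg (fun t => b x1 (N x2) t) (pc2 (N x4) (N x5) x3))) - (congrArg (⇑N) (congrArg (fun t => b x1 (N x2) t) (pc (N x5) (N x3) x4))) - (congrArg (⇑N) (pc2 x1 x2 (N (b (N x3) (N x4) x5)))) - (congrArg (⇑N) (congrArg (fun t => b x1 x2 t) (congrArg (⇑N) (pc2 (N x4) (N x5) x3)))) - (congrArg (⇑N) (congrArg (fun t => b x1 x2 t) (congrArg (⇑N) (pc (N x5) (N x3) x4)))) + (congrArg (⇑N) (pc2 x1 x2 (N (N (b (N x3)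 x4 x5))))) + (congrArg (⇑N) (pc2 x1 x2 (N (N (b x3 (N x4) x5))))) + (congrArg (⇑N) (pc2 x1 x2 (N (N (b x3 x4 (N x5)))))) - (congrArg (⇑N) (pc2 x1 x2 (N (N (N (b x3 x4 x5)))))) + (congrArg (⇑N) (congrArg (⇑N) (congrArg (fun t => b x1 x2 t) (pc2 (N x4) (N x5) x3)))) + (congrArg (⇑N) (congrArg (⇑N) (congrArg (fun t => b x1 x2 t) (pc (N x5) (N x3) x4)))) + (congrArg (⇑N) (congrArg (fun t => b t x4 x5) (congrArg (⇑N) (pc2 (N x2) (N x3) x1)))) + (congrArg (⇑N) (congrArg (fun t => b t x4 x5) (congrArg (⇑N) (pc (N x3) (N x1) x2)))) + (congrArg (⇑N) (congrArg (fun t => b t (N x4) x5) (pc2 (N x2) (N x3) x1))) + (congrArg (⇑N) (congrArg (fun t => b t (N x4) x5) (pc (N x3) (N x1) x2))) + (congrArg (⇑N) (congrArg (fun t => b t x4 (N x5)) (pc2 (N x2) (N x3) x1))) + (congrArg (⇑N) (congrArg (fun t => b t x4 (N x5)) (pc (N x3) (N x1) x2))) - (congrArg (⇑N) (congrArg (⇑N)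 (congrArg (fun t => b t x4 x5) (pc2 (N x2) (N x3) x1)))) - (congrArg (⇑N) (congrArg (⇑N) (congrArg (fun t => b t x4 x5) (pc (N x3) (N x1) x2)))) + (congrArg (⇑N) (congrArg (fun t => b (N x3) t x5) (pc2 (N x2) (N x4) x1))) + (congrArg (⇑N) (congrArg (fun t => b (N x3) t x5) (pc (N x4) (N x1) x2))) - (congrArg (⇑N) (p12 (N x3) (N (b (N x1) x2 x4)) x5)) - (congrArg (⇑N) (p12 (N x3) (N (b x1 (N x2) x4)) x5)) - (congrArg (⇑N) (p12 (N x3) (N (b x1 x2 (N x4))) x5)) + (congrArg (⇑N) (p12 (N x3) (N (N (b x1 x2 x4))) x5)) + (congrArg (⇑N) (p12 x3 (N (b (N x1) (N x2) x4)) x5)) + (congrArg (⇑N) (congrArg (fun t => b x3 t x5) (congrArg (⇑N) (pc2 (N x2) (N x4) x1)))) + (congrArg (⇑N) (congrArg (fun t => b x3 t x5) (congrArg (⇑N) (pc (N x4) (N x1) x2)))) - (congrArg (⇑N) (p12 x3 (N (N (b (N x1) x2 x4))) x5)) - (congrArg (⇑N) (p12 x3 (N (N (b x1 (N x2) x4)))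 x5)) - (congrArg (⇑N) (p12 x3 (N (N (b x1 x2 (N x4)))) x5)) + (congrArg (⇑N) (p12 x3 (N (N (N (b x1 x2 x4)))) x5)) + (congrArg (⇑N) (congrArg (fun t => b x3 t (N x5)) (pc2 (N x2) (N x4) x1))) + (congrArg (⇑N) (congrArg (fun t => b x3 t (N x5)) (pc (N x4) (N x1) x2))) - (congrArg (⇑N) (p12 x3 (N (b (N x1) x2 x4)) (N x5))) - (congrArg (⇑N) (p12 x3 (N (b x1 (N x2) x4)) (N x5))) - (congrArg (⇑N) (p12 x3 (N (b x1 x2 (N x4))) (N x5))) + (congrArg (⇑N) (p12 x3 (N (N (b x1 x2 x4))) (N x5))) - (congrArg (⇑N) (congrArg (⇑N) (congrArg (fun t => b x3 t x5) (pc2 (N x2) (N x4) x1)))) - (congrArg (⇑N) (congrArg (⇑N) (congrArg (fun t => b x3 t x5) (pc (N x4) (N x1) x2)))) + (congrArg (⇑N) (congrArg (⇑N) (p12 x3 (N (b (N x1) x2 x4)) x5))) + (congrArg (⇑N) (congrArg (⇑N) (p12 x3 (N (b x1 (N x2) x4)) x5))) + (congrArg (⇑N) (congrArg (⇑N) (p12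 x3 (N (b x1 x2 (N x4))) x5))) - (congrArg (⇑N) (congrArg (⇑N) (p12 x3 (N (N (b x1 x2 x4))) x5))) + (congrArg (⇑N) (congrArg (fun t => b (N x3) x4 t) (pc2 (N x2) (N x5) x1))) + (congrArg (⇑N) (congrArg (fun t => b (N x3) x4 t) (pc (N x5) (N x1) x2))) + (congrArg (⇑N) (congrArg (fun t => b x3 (N x4) t) (pc2 (N x2) (N x5) x1))) + (congrArg (⇑N) (congrArg (fun t => b x3 (N x4) t) (pc (N x5) (N x1) x2))) + (congrArg (⇑N) (pc2 x3 x4 (N (b (N x1) (N x2) x5)))) + (congrArg (⇑N) (congrArg (fun t => b x3 x4 t) (congrArg (⇑N) (pc2 (N x2) (N x5) x1)))) + (congrArg (⇑N) (congrArg (fun t => b x3 x4 t) (congrArg (⇑N) (pc (N x5) (N x1) x2)))) - (congrArg (⇑N) (pc2 x3 x4 (N (N (b (N x1) x2 x5))))) - (congrArg (⇑N) (pc2 x3 x4 (N (N (b x1 (N x2) x5))))) - (congrArg (⇑N) (pc2 x3 x4 (N (N (b x1 x2 (N x5)))))) + (congrArg (⇑N) (pc2 x3 x4 (N (N (N (b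 x1 x2 x5)))))) - (congrArg (⇑N) (congrArg (⇑N) (congrArg (fun t => b x3 x4 t) (pc2 (N x2) (N x5) x1)))) - (congrArg (⇑N) (congrArg (⇑N) (congrArg (fun t => b x3 x4 t) (pc (N x5) (N x1) x2)))) + (p13 (N x5) (N x3) (N (b (N x1) x2 x4))) + (p13 (N x5) (N x3) (N (b x1 (N x2) x4))) + (p13 (N x5) (N x3) (N (b x1 x2 (N x4)))) - (p13 (N x5) (N x3) (N (N (b x1 x2 x4)))) + (congrArg (⇑N) (pc2 (N x4) (N x5) (b x1 x2 (N x3)))) + (congrArg (⇑N) (pc2 (N x4) x5 (N (b x1 x2 (N x3))))) + (congrArg (⇑N) (pc2 x4 (N x5) (N (b x1 x2 (N x3))))) - (congrArg (⇑N) (congrArg (⇑N) (pc2 (N x4) x5 (b x1 x2 (N x3))))) - (congrArg (⇑N) (congrArg (⇑N) (pc2 x4 (N x5) (b x1 x2 (N x3))))) - (congrArg (⇑N) (congrArg (⇑N) (pc2 x4 x5 (N (b x1 x2 (N x3)))))) + (congrArg (⇑N) (congrArg (⇑N) (congrArg (⇑N) (pc2 x4 x5 (b x1 x2 (N x3))))))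 + (pc2 (N x3) (N x5) (N (b x1 x2 (N x4)))) - (congrArg (⇑N) (pc2 (N x3) (N x5) (b x1 x2 (N x4)))) - (congrArg (⇑N) (pc2 (N x3) x5 (N (b x1 x2 (N x4))))) - (congrArg (⇑N) (pc2 x3 (N x5) (N (b x1 x2 (N x4))))) + (congrArg (⇑N) (congrArg (⇑N) (pc2 (N x3) x5 (b x1 x2 (N x4))))) + (congrArg (⇑N) (congrArg (⇑N) (pc2 x3 (N x5) (b x1 x2 (N x4))))) + (congrArg (⇑N) (congrArg (⇑N) (pc2 x3 x5 (N (b x1 x2 (N x4)))))) - (congrArg (⇑N) (congrArg (⇑N) (congrArg (⇑N) (pc2 x3 x5 (b x1 x2 (N x4)))))) + (congrArg (⇑N) (pc2 (N x4) (N x5) (b x1 (N x2) x3))) + (congrArg (⇑N) (pc2 (N x4) x5 (N (b x1 (N x2) x3)))) + (congrArg (⇑N) (pc2 x4 (N x5) (N (b x1 (N x2) x3)))) - (congrArg (⇑N) (congrArg (⇑N) (pc2 (N x4) x5 (b x1 (N x2) x3)))) - (congrArg (⇑N) (congrArg (⇑N) (pc2 x4 (N x5) (b x1 (N x2) x3))))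 - (congrArg (⇑N) (congrArg (⇑N) (pc2 x4 x5 (N (b x1 (N x2) x3))))) + (congrArg (⇑N) (congrArg (⇑N) (congrArg (⇑N) (pc2 x4 x5 (b x1 (N x2) x3))))) + (pc2 (N x3) (N x5) (N (b x1 (N x2) x4))) - (congrArg (⇑N) (pc2 (N x3) (N x5) (b x1 (N x2) x4))) - (congrArg (⇑N) (pc2 (N x3) x5 (N (b x1 (N x2) x4)))) - (congrArg (⇑N) (pc2 x3 (N x5) (N (b x1 (N x2) x4)))) + (congrArg (⇑N) (congrArg (⇑N) (pc2 (N x3) x5 (b x1 (N x2) x4)))) + (congrArg (⇑N) (congrArg (⇑N) (pc2 x3 (N x5) (b x1 (N x2) x4)))) + (congrArg (⇑N) (congrArg (⇑N) (pc2 x3 x5 (N (b x1 (N x2) x4))))) - (congrArg (⇑N) (congrArg (⇑N) (congrArg (⇑N) (pc2 x3 x5 (b x1 (N x2) x4))))) + (congrArg (⇑N) (pc2 (N x4) (N x5) (b (N x1) x2 x3))) + (congrArg (⇑N) (pc2 (N x4) x5 (N (b (N x1) x2 x3)))) + (congrArg (⇑N) (pc2 x4 (N x5) (N (b (N x1) x2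 x3)))) - (congrArg (⇑N) (congrArg (⇑N) (pc2 (N x4) x5 (b (N x1) x2 x3)))) - (congrArg (⇑N) (congrArg (⇑N) (pc2 x4 (N x5) (b (N x1) x2 x3)))) - (congrArg (⇑N) (congrArg (⇑N) (pc2 x4 x5 (N (b (N x1) x2 x3))))) + (congrArg (⇑N) (congrArg (⇑N) (congrArg (⇑N) (pc2 x4 x5 (b (N x1) x2 x3))))) + (pc2 (N x3) (N x5) (N (b (N x1) x2 x4))) - (congrArg (⇑N) (pc2 (N x3) (N x5) (b (N x1) x2 x4))) - (congrArg (⇑N) (pc2 (N x3) x5 (N (b (N x1) x2 x4)))) - (congrArg (⇑N) (pc2 x3 (N x5) (N (b (N x1) x2 x4)))) + (congrArg (⇑N) (congrArg (⇑N) (pc2 (N x3) x5 (b (N x1) x2 x4)))) + (congrArg (⇑N) (congrArg (⇑N) (pc2 x3 (N x5) (b (N x1) x2 x4)))) + (congrArg (⇑N) (congrArg (⇑N) (pc2 x3 x5 (N (b (N x1) x2 x4))))) - (congrArg (⇑N) (congrArg (⇑N) (congrArg (⇑N) (pc2 x3 x5 (b (N x1) x2 x4))))) - (congrArg (⇑N)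 (pc2 (N x4) x5 (N (N (b x1 x2 x3))))) - (congrArg (⇑N) (pc2 x4 (N x5) (N (N (b x1 x2 x3))))) + (congrArg (⇑N) (congrArg (⇑N) (pc2 x4 x5 (N (N (b x1 x2 x3)))))) - (pc2 (N x3) (N x5) (N (N (b x1 x2 x4)))) + (congrArg (⇑N) (pc2 (N x3) x5 (N (N (b x1 x2 x4))))) + (congrArg (⇑N) (pc2 x3 (N x5) (N (N (b x1 x2 x4))))) - (congrArg (⇑N) (congrArg (⇑N) (pc2 x3 x5 (N (N (b x1 x2 x4)))))) + (congrArg (⇑N) (pc2 x1 x2 (b (N x3) (N x4) (N x5)))) - (congrArg (⇑N) (p12 (N x3) (b x1 x2 (N x4)) (N x5))) - (congrArg (⇑N) (p12 (N x3) (b x1 (N x2) x4) (N x5))) - (congrArg (⇑N) (p12 (N x3) (b (N x1) x2 x4) (N x5))) - (congrArg (⇑N) (p12 x3 (b (N x1) (N x2) (N x4)) x5)) - (congrArg (⇑N) (pc2 x3 x4 (b (N x1) (N x2) (N x5)))) - (congrArg (⇑N) (congrArg (⇑N) (pc2 (N x4) (N x5) (b x1 x2 x3)))) + (congrArg (⇑N)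 (congrArg (⇑N) (congrArg (⇑N) (pc2 (N x4) x5 (b x1 x2 x3))))) + (congrArg (⇑N) (congrArg (⇑N) (congrArg (⇑N) (pc2 x4 (N x5) (b x1 x2 x3))))) - (congrArg (⇑N) (congrArg (⇑N) (congrArg (⇑N) (congrArg (⇑N) (pc2 x4 x5 (b x1 x2 x3)))))) + (congrArg (⇑N) (congrArg (⇑N) (pc2 (N x3) (N x5) (b x1 x2 x4)))) - (congrArg (⇑N) (congrArg (⇑N) (congrArg (⇑N) (pc2 (N x3) x5 (b x1 x2 x4))))) - (congrArg (⇑N) (congrArg (⇑N) (congrArg (⇑N) (pc2 x3 (N x5) (b x1 x2 x4))))) + (congrArg (⇑N) (congrArg (⇑N) (congrArg (⇑N) (congrArg (⇑N) (pc2 x3 x5 (b x1 x2 x4)))))) + (congrArg (⇑N) (congrArg (⇑N) (p12 x3 (b x1 x2 (N x4)) (N x5)))) + (congrArg (⇑N) (congrArg (⇑N) (p12 (N x3) (b x1 x2 x4) (N x5)))) + (congrArg (⇑N) (congrArg (⇑N) (p12 (N x3) (b x1 x2 (N x4)) x5))) + (congrArg (⇑N) (congrArg (⇑N) (p12 x3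 (b x1 (N x2) x4) (N x5)))) + (congrArg (⇑N) (congrArg (⇑N) (p12 (N x3) (b x1 (N x2) x4) x5))) + (congrArg (⇑N) (congrArg (⇑N) (p12 x3 (b (N x1) x2 x4) (N x5)))) + (congrArg (⇑N) (congrArg (⇑N) (p12 (N x3) (b (N x1) x2 x4) x5))) - (congrArg (⇑N) (congrArg (⇑N) (congrArg (⇑N) (p12 x3 (b x1 x2 x4) (N x5))))) - (congrArg (⇑N) (congrArg (⇑N) (congrArg (⇑N) (p12 x3 (b x1 x2 (N x4)) x5)))) - (congrArg (⇑N) (congrArg (⇑N) (congrArg (⇑N) (p12 (N x3) (b x1 x2 x4) x5)))) - (congrArg (⇑N) (congrArg (⇑N) (congrArg (⇑N) (p12 x3 (b x1 (N x2) x4) x5)))) - (congrArg (⇑N) (congrArg (⇑N) (congrArg (⇑N) (p12 x3 (b (N x1) x2 x4) x5)))) + (congrArg (⇑N) (congrArg (⇑N) (congrArg (⇑N) (congrArg (⇑N) (p12 x3 (b x1 x2 x4) x5))))) - (congrArg (⇑N) (pc2 x1 x2 (N (b x3 (N x4) (N x5))))) - (congrArg (⇑N) (pc2 x1 x2 (N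 (b (N x3) x4 (N x5))))) + (congrArg (⇑N) (p12 x3 (N (b x1 (N x2) (N x4))) x5)) + (congrArg (⇑N) (p12 x3 (N (b (N x1) x2 (N x4))) x5)) + (congrArg (⇑N) (pc2 x3 x4 (N (b x1 (N x2) (N x5))))) + (congrArg (⇑N) (pc2 x3 x4 (N (b (N x1) x2 (N x5)))))
end
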